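/- Let D ≥ 1, σ > 0, and for each t ∈ [0,1] let p_t : ℝ^D → ℝ be a continuously differentiable strictly positive probability density. Let μ : ℝ^D × [0,1] → ℝ^D be continuous and set φ*(x,t) = −μ(x,t) + σ² ∇_x log p_t(x). Let φ : ℝ^D × [0,1] → ℝ^D be continuously differentiable and satisfy the same integrability and divergence-identity assumptions as φ* (namely, all integrands of the cost functional L are integrable and ∫_{ℝ^D} ( p_t(x) tr J_φ(x,t) + ⟪φ(x,t), ∇p_t(x)⟫ ) dx = 0 for a.e. t). If L[φ] = L[φ*], where L[φ] = ∫₀¹ ∫_{ℝ^D} p_t(x) ( ‖φ(x,t)‖² + 2 ⟪μ(x,t), φ(x,t)⟫ + 2 σ² tr J_φ(x,t) ) dx dt, then φ(x,t) = φ*(x,t) for (Lebesgue-)almost every (x,t) ∈ ℝ^D × [0,1]. -/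

import Mathlib

/-!
Write `G = ∇p` and `g = φ*`, so that `p (g + μ) = σ² G`. Completing the square with this
identity turns the cost integrand of `f` into `p ‖f - g‖² - p ‖g‖²` plus `2σ² (p tr J_f + ⟪f, G⟫)`,
whose `x`-integral vanishes by the divergence identity. Hence the time slices of the cost satisfy
`L_t[φ] - L_t[φ*] = ∫ p_t ‖φ - φ*‖²`, a nonnegative function of `t` with vanishing integral. It is
therefore zero for a.e. `t`, and since `p_t > 0` and both fields are continuous in `x`,
`φ(·, t) = φ*(·, t)` for a.e. `t`.
-/

open MeasureTheory
open scoped RealInnerProductSpace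

/-- The divergence (trace of the Jacobian) of a vector field `f : ℝ^D → ℝ^D`:
`tr J_f(x) = ∑ i ∂_i f_i(x)`. -/
noncomputable def divg {D : ℕ}
    (f : EuclideanSpace ℝ (Fin D) → EuclideanSpace ℝ (Fin D))
    (x : EuclideanSpace ℝ (Fin D)) : ℝ :=
  ∑ i, fderiv ℝ f x (EuclideanSpace.single i 1) i

section Gradient

variable {E : Type*} [NormedAddCommGroup E] [InnerProductSpace ℝ E] [CompleteSpace E]
  {f : E → ℝ}

lemma gradient_log_eq_inv_smul {x : E} (hf : DifferentiableAt ℝ f x) (hx : f x ≠ 0) :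
    gradient (fun y => Real.log (f y)) x = (f x)⁻¹ • gradient f x := by
  have h : HasFDerivAt (fun y => Real.log (f y)) ((f x)⁻¹ • fderiv ℝ f x) x :=
    (Real.hasDerivAt_log hx).comp_hasFDerivAt x hf.hasFDerivAt
  rw [gradient, h.fderiv, map_smul, gradient]

lemma ContDiff.continuous_gradient (hf : ContDiff ℝ 1 f) : Continuous (gradient f) :=
  (InnerProductSpace.toDual ℝ E).symm.continuous.comp (hf.continuous_fderiv one_ne_zero)

lemma ContDiff.continuous_gradient_log (hf : ContDiff ℝ 1 f) (hf₀ : ∀ x, f x ≠ 0) :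
    Continuous fun x => gradient (fun y => Real.log (f y)) x := by
  have h : (gradient fun y => Real.log (f y)) = fun x => (f x)⁻¹ • gradient f x :=
    funext fun x => gradient_log_eq_inv_smul (hf.differentiable one_ne_zero x) (hf₀ x)
  rw [h]
  exact (hf.continuous.inv₀ hf₀).smul hf.continuous_gradient

lemma smul_smul_gradient_log {x : E} (hf : DifferentiableAt ℝ f x) (hx : f x ≠ 0) (c : ℝ) :
    f x • c • gradient (fun y => Real.log (f y)) x = c • gradient f x := by
  rw [gradient_log_eq_inv_smul hf hx, smul_comm (f x) c, smul_inv_smul₀ hx]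

end Gradient

section CompletingTheSquare

variable {E : Type*} [NormedAddCommGroup E] [InnerProductSpace ℝ E]

lemma mul_norm_sub_sq_eq {p c : ℝ} {f g m G : E} (hscore : p • (g + m) = c • G) :
    p * ‖f - g‖ ^ 2 = p * ‖f‖ ^ 2 + 2 * (p * ⟪m, f⟫) - 2 * c * ⟪f, G⟫ + p * ‖g‖ ^ 2 := by
  have h : c * ⟪f, G⟫ = p * ⟪f, g⟫ + p * ⟪f, m⟫ := by
    rw [← real_inner_smul_right, ← hscore, real_inner_smul_right, inner_add_right, mul_add]
  rw [norm_sub_sq_real, real_inner_comm f m]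
  linear_combination 2 * h

variable {X : Type*} [MeasurableSpace X]

/-- `d` stands for the divergence of `f`, `G` for the gradient of the density `p`, and `m` for
the drift. -/
def CostIntegrable (ν : Measure X) (p d : X → ℝ) (m G f : X → E) : Prop :=
  Integrable (fun x => p x * ‖f x‖ ^ 2) ν ∧ Integrable (fun x => p x * ⟪m x, f x⟫) ν ∧
    Integrable (fun x => p x * d x) ν ∧ Integrable (fun x => ⟪f x, G x⟫) ν

namespace CostIntegrable

variable {ν : Measure X} {p d : X → ℝ} {m G f g : X → E} {c : ℝ}

lemma integral_mul_cost (hf : CostIntegrable ν p d m G f) :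
    ∫ x, p x * (‖f x‖ ^ 2 + 2 * ⟪m x, f x⟫ + 2 * c * d x) ∂ν
      = ∫ x, p x * ‖f x‖ ^ 2 ∂ν + 2 * ∫ x, p x * ⟪m x, f x⟫ ∂ν + 2 * c * ∫ x, p x * d x ∂ν := by
  obtain ⟨h₁, h₂, h₃, -⟩ := hf
  have h₁₂ : Integrable (fun x => p x * ‖f x‖ ^ 2 + 2 * (p x * ⟪m x, f x⟫)) ν :=
    h₁.add (h₂.const_mul 2)
  calc _ = ∫ x, p x * ‖f x‖ ^ 2 + 2 * (p x * ⟪m x, f x⟫) + 2 * c * (p x * d x) ∂ν := by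
        congr 1 with x
        ring
    _ = _ := by
        rw [integral_add h₁₂ (h₃.const_mul _), integral_add h₁ (h₂.const_mul 2),
          integral_const_mul, integral_const_mul]

lemma integrable_mul_norm_sub_sq (hscore : ∀ x, p x • (g x + m x) = c • G x)
    (hf : CostIntegrable ν p d m G f) (hg : Integrable (fun x => p x * ‖g x‖ ^ 2) ν) :
    Integrable (fun x => p x * ‖f x - g x‖ ^ 2) ν := by
  obtain ⟨h₁, h₂, -, h₄⟩ := hf
  simp_rw [mul_norm_sub_sq_eq (hscore _)]
  exact ((h₁.add (h₂.const_mul 2)).sub (h₄.const_mul _)).add hg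

lemma integral_mul_cost_eq (hscore : ∀ x, p x • (g x + m x) = c • G x)
    (hf : CostIntegrable ν p d m G f) (hg : Integrable (fun x => p x * ‖g x‖ ^ 2) ν)
    (hdiv : ∫ x, (p x * d x + ⟪f x, G x⟫) ∂ν = 0) :
    ∫ x, p x * (‖f x‖ ^ 2 + 2 * ⟪m x, f x⟫ + 2 * c * d x) ∂ν
      = ∫ x, p x * ‖f x - g x‖ ^ 2 ∂ν - ∫ x, p x * ‖g x‖ ^ 2 ∂ν := by
  obtain ⟨h₁, h₂, h₃, h₄⟩ := hf
  have h₁₂ : Integrable (fun x => p x * ‖f x‖ ^ 2 + 2 * (p x * ⟪m x, f x⟫)) ν :=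
    h₁.add (h₂.const_mul 2)
  have h₁₂₄ : Integrable
      (fun x => p x * ‖f x‖ ^ 2 + 2 * (p x * ⟪m x, f x⟫) - 2 * c * ⟪f x, G x⟫) ν :=
    h₁₂.sub (h₄.const_mul _)
  have hd : ∫ x, p x * d x ∂ν = -∫ x, ⟪f x, G x⟫ ∂ν := by
    rw [integral_add h₃ h₄] at hdiv
    linarith
  have hsq : ∫ x, p x * ‖f x - g x‖ ^ 2 ∂ν = ∫ x, p x * ‖f x‖ ^ 2 ∂ν
      + 2 * ∫ x, p x * ⟪m x, f x⟫ ∂ν - 2 * c * ∫ x, ⟪f x, G x⟫ ∂ν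
      + ∫ x, p x * ‖g x‖ ^ 2 ∂ν := by
    simp_rw [mul_norm_sub_sq_eq (hscore _)]
    rw [integral_add h₁₂₄ hg, integral_sub h₁₂ (h₄.const_mul _), integral_add h₁ (h₂.const_mul 2),
      integral_const_mul, integral_const_mul]
  rw [integral_mul_cost ⟨h₁, h₂, h₃, h₄⟩, hd, hsq]
  ring

lemma integral_mul_cost_sub_integral_mul_cost {d' : X → ℝ}
    (hscore : ∀ x, p x • (g x + m x) = c • G x)
    (hf : CostIntegrable ν p d m G f) (hg : CostIntegrable ν p d' m G g)
    (hdiv_f : ∫ x, (p x * d x + ⟪f x, G x⟫) ∂ν = 0)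
    (hdiv_g : ∫ x, (p x * d' x + ⟪g x, G x⟫) ∂ν = 0) :
    ∫ x, p x * (‖f x‖ ^ 2 + 2 * ⟪m x, f x⟫ + 2 * c * d x) ∂ν
      - ∫ x, p x * (‖g x‖ ^ 2 + 2 * ⟪m x, g x⟫ + 2 * c * d' x) ∂ν
      = ∫ x, p x * ‖f x - g x‖ ^ 2 ∂ν := by
  rw [hf.integral_mul_cost_eq hscore hg.1 hdiv_f, hg.integral_mul_cost_eq hscore hg.1 hdiv_g]
  simp

end CostIntegrable

end CompletingTheSquare

section Positivity

variable {α E : Type*} [MeasurableSpace α] {ν : Measure α}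

lemma ae_eq_zero_of_nonneg_of_ae_eq_sub {S F G : α → ℝ} (hS : 0 ≤ᵐ[ν] S)
    (hF : Integrable F ν) (hG : Integrable G ν) (hSFG : S =ᵐ[ν] F - G)
    (hFG : ∫ a, F a ∂ν = ∫ a, G a ∂ν) : S =ᵐ[ν] 0 := by
  refine (integral_eq_zero_iff_of_nonneg_ae hS ((hF.sub hG).congr hSFG.symm)).mp ?_
  rw [integral_congr_ae hSFG, integral_sub' hF hG, hFG, sub_self]

lemma ae_eq_of_integral_mul_norm_sub_sq_eq_zero [NormedAddCommGroup E] {p : α → ℝ}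
    {f g : α → E} (hp : ∀ a, 0 < p a) (hint : Integrable (fun a => p a * ‖f a - g a‖ ^ 2) ν)
    (h : ∫ a, p a * ‖f a - g a‖ ^ 2 ∂ν = 0) : f =ᵐ[ν] g := by
  have hnonneg : 0 ≤ᵐ[ν] fun a => p a * ‖f a - g a‖ ^ 2 :=
    .of_forall fun a => mul_nonneg (hp a).le (sq_nonneg _)
  filter_upwards [(integral_eq_zero_iff_of_nonneg_ae hnonneg hint).mp h] with a ha
  simpa [(hp a).ne', sub_eq_zero] using ha

lemma eq_of_integral_mul_norm_sub_sq_eq_zero [TopologicalSpace α] [ν.IsOpenPosMeasure]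
    [NormedAddCommGroup E] {p : α → ℝ} {f g : α → E} (hf : Continuous f) (hg : Continuous g)
    (hp : ∀ a, 0 < p a) (hint : Integrable (fun a => p a * ‖f a - g a‖ ^ 2) ν)
    (h : ∫ a, p a * ‖f a - g a‖ ^ 2 ∂ν = 0) : f = g :=
  (Continuous.ae_eq_iff_eq ν hf hg).mp (ae_eq_of_integral_mul_norm_sub_sq_eq_zero hp hint h)

end Positivity

theorem costFunctional_eq_implies_ae_eq_general
    (D : ℕ) (σ : ℝ)
    (p : ℝ → EuclideanSpace ℝ (Fin D) → ℝ)
    (hp_diff : ∀ t ∈ Set.Icc (0:ℝ) 1, ContDiff ℝ 1 (p t))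
    (hp_pos : ∀ t ∈ Set.Icc (0:ℝ) 1, ∀ x, 0 < p t x)
    (μ : EuclideanSpace ℝ (Fin D) → ℝ → EuclideanSpace ℝ (Fin D))
    (hμ_cont : Continuous fun q : EuclideanSpace ℝ (Fin D) × ℝ => μ q.1 q.2)
    (φ φs : EuclideanSpace ℝ (Fin D) → ℝ → EuclideanSpace ℝ (Fin D))
    (hφs : ∀ x t, φs x t
      = -μ x t + σ ^ 2 • gradient (fun y => Real.log (p t y)) x)
    (hφ_diff : ContDiffOn ℝ 1 (fun q : EuclideanSpace ℝ (Fin D) × ℝ => φ q.1 q.2)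
      (Set.univ ×ˢ Set.Icc (0:ℝ) 1))
    -- integrability in `x` of every integrand appearing in the cost functional,
    -- for both `φ` and `φ*`
    (hInt : ∀ f ∈ ({φ, φs} :
        Set (EuclideanSpace ℝ (Fin D) → ℝ → EuclideanSpace ℝ (Fin D))),
      ∀ t ∈ Set.Icc (0:ℝ) 1,
        Integrable (fun x => p t x * ‖f x t‖ ^ 2) ∧
        Integrable (fun x => p t x * ⟪μ x t, f x t⟫) ∧
        Integrable (fun x => p t x * divg (fun y => f y t) x) ∧
        Integrable (fun x => ⟪f x t, gradient (p t) x⟫))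
    -- integrability in `t` of the corresponding time integrands
    (hIntT : ∀ f ∈ ({φ, φs} :
        Set (EuclideanSpace ℝ (Fin D) → ℝ → EuclideanSpace ℝ (Fin D))),
      IntegrableOn (fun t => ∫ x, p t x * ‖f x t‖ ^ 2) (Set.Icc (0:ℝ) 1) ∧
      IntegrableOn (fun t => ∫ x, p t x * ⟪μ x t, f x t⟫) (Set.Icc (0:ℝ) 1) ∧
      IntegrableOn (fun t => ∫ x, p t x * divg (fun y => f y t) x) (Set.Icc (0:ℝ) 1))
    -- the divergence identity, for a.e. `t ∈ [0,1]`, for both `φ` and `φ*`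
    (hdiv : ∀ f ∈ ({φ, φs} :
        Set (EuclideanSpace ℝ (Fin D) → ℝ → EuclideanSpace ℝ (Fin D))),
      ∀ᵐ t ∂(volume.restrict (Set.Icc (0:ℝ) 1)),
        ∫ x, (p t x * divg (fun y => f y t) x + ⟪f x t, gradient (p t) x⟫) = 0)
    -- equality of the two values of the cost functional
    (hL : ∫ t in Set.Icc (0:ℝ) 1, ∫ x,
        p t x * (‖φ x t‖ ^ 2 + 2 * ⟪μ x t, φ x t⟫
          + 2 * σ ^ 2 * divg (fun y => φ y t) x)
      = ∫ t in Set.Icc (0:ℝ) 1, ∫ x,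
        p t x * (‖φs x t‖ ^ 2 + 2 * ⟪μ x t, φs x t⟫
          + 2 * σ ^ 2 * divg (fun y => φs y t) x)) :
    ∀ᵐ q ∂((volume : Measure (EuclideanSpace ℝ (Fin D))).prod
        (volume.restrict (Set.Icc (0:ℝ) 1))),
      φ q.1 q.2 = φs q.1 q.2 := by
  have hmem : φ ∈ ({φ, φs} : Set _) := Set.mem_insert _ _
  have hmem_s : φs ∈ ({φ, φs} : Set _) := Set.mem_insert_of_mem _ rfl
  have hscore : ∀ t ∈ Set.Icc (0:ℝ) 1, ∀ x,
      p t x • (φs x t + μ x t) = σ ^ 2 • gradient (p t) x := by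
    intro t ht x
    rw [hφs, neg_add_cancel_comm]
    exact smul_smul_gradient_log ((hp_diff t ht).differentiable one_ne_zero x)
      (hp_pos t ht x).ne' _
  have hcost : ∀ f ∈ ({φ, φs} : Set _),
      IntegrableOn (fun t => ∫ x, p t x * (‖f x t‖ ^ 2 + 2 * ⟪μ x t, f x t⟫
        + 2 * σ ^ 2 * divg (fun y => f y t) x)) (Set.Icc (0:ℝ) 1) := by
    intro f hf
    obtain ⟨h₁, h₂, h₃⟩ := hIntT f hf
    exact ((h₁.add (h₂.const_mul 2)).add (h₃.const_mul _)).congr_fun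
      (fun t ht => (CostIntegrable.integral_mul_cost (hInt f hf t ht)).symm) measurableSet_Icc
  have hzero : (fun t => ∫ x, p t x * ‖φ x t - φs x t‖ ^ 2)
      =ᵐ[volume.restrict (Set.Icc (0:ℝ) 1)] 0 := by
    refine ae_eq_zero_of_nonneg_of_ae_eq_sub ?_ (hcost φ hmem) (hcost φs hmem_s) ?_ hL
    · filter_upwards [ae_restrict_mem measurableSet_Icc] with t ht
      exact integral_nonneg fun x => mul_nonneg (hp_pos t ht x).le (sq_nonneg _)
    · filter_upwards [hdiv φ hmem, hdiv φs hmem_s, ae_restrict_mem measurableSet_Icc]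
        with t hdiv_φ hdiv_φs ht
      exact (CostIntegrable.integral_mul_cost_sub_integral_mul_cost (hscore t ht)
        (hInt φ hmem t ht) (hInt φs hmem_s t ht) hdiv_φ hdiv_φs).symm
  have hslice : ∀ᵐ t ∂volume.restrict (Set.Icc (0:ℝ) 1), ∀ x, φ x t = φs x t := by
    filter_upwards [hzero, ae_restrict_mem measurableSet_Icc] with t hzero_t ht
    have hcont_φ : Continuous fun x => φ x t :=
      hφ_diff.continuousOn.comp_continuous (continuous_id.prodMk continuous_const)
        fun _ => ⟨trivial, ht⟩
    have hcont_φs : Continuous fun x => φs x t := by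
      have hcont_μ : Continuous fun x => μ x t :=
        hμ_cont.comp (continuous_id.prodMk continuous_const)
      have hcont_score := (hp_diff t ht).continuous_gradient_log fun x => (hp_pos t ht x).ne'
      simp_rw [hφs]
      fun_prop
    exact congrFun (eq_of_integral_mul_norm_sub_sq_eq_zero hcont_φ hcont_φs (hp_pos t ht)
      (CostIntegrable.integrable_mul_norm_sub_sq (hscore t ht) (hInt φ hmem t ht)
        (hInt φs hmem_s t ht).1) hzero_t)
  exact (Measure.quasiMeasurePreserving_snd.ae hslice).mono fun q hq => hq q.1

/-- **Uniqueness of the minimizer of the score-matching cost functional.**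
With `φ*(x,t) = -μ(x,t) + σ² ∇ₓ log p_t(x)`, under the same integrability and
divergence-identity assumptions as for `φ*`, if `L[φ] = L[φ*]` then
`φ = φ*` Lebesgue-almost everywhere on `ℝ^D × [0,1]`. -/
theorem costFunctional_eq_implies_ae_eq
    (D : ℕ) (hD : 1 ≤ D) (σ : ℝ) (hσ : 0 < σ)
    (p : ℝ → EuclideanSpace ℝ (Fin D) → ℝ)
    (hp_diff : ∀ t ∈ Set.Icc (0:ℝ) 1, ContDiff ℝ 1 (p t))
    (hp_pos : ∀ t ∈ Set.Icc (0:ℝ) 1, ∀ x, 0 < p t x)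
    (hp_prob : ∀ t ∈ Set.Icc (0:ℝ) 1, ∫ x, p t x = 1)
    (μ : EuclideanSpace ℝ (Fin D) → ℝ → EuclideanSpace ℝ (Fin D))
    (hμ_cont : Continuous fun q : EuclideanSpace ℝ (Fin D) × ℝ => μ q.1 q.2)
    (φ φs : EuclideanSpace ℝ (Fin D) → ℝ → EuclideanSpace ℝ (Fin D))
    (hφs : ∀ x t, φs x t
      = -μ x t + σ ^ 2 • gradient (fun y => Real.log (p t y)) x)
    (hφ_diff : ContDiffOn ℝ 1 (fun q : EuclideanSpace ℝ (Fin D) × ℝ => φ q.1 q.2)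
      (Set.univ ×ˢ Set.Icc (0:ℝ) 1))
    -- integrability in `x` of every integrand appearing in the cost functional,
    -- for both `φ` and `φ*`
    (hInt : ∀ f ∈ ({φ, φs} :
        Set (EuclideanSpace ℝ (Fin D) → ℝ → EuclideanSpace ℝ (Fin D))),
      ∀ t ∈ Set.Icc (0:ℝ) 1,
        Integrable (fun x => p t x * ‖f x t‖ ^ 2) ∧
        Integrable (fun x => p t x * ⟪μ x t, f x t⟫) ∧
        Integrable (fun x => p t x * divg (fun y => f y t) x) ∧
        Integrable (fun x => ⟪f x t, gradient (p t) x⟫))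
    -- integrability in `t` of the corresponding time integrands
    (hIntT : ∀ f ∈ ({φ, φs} :
        Set (EuclideanSpace ℝ (Fin D) → ℝ → EuclideanSpace ℝ (Fin D))),
      IntegrableOn (fun t => ∫ x, p t x * ‖f x t‖ ^ 2) (Set.Icc (0:ℝ) 1) ∧
      IntegrableOn (fun t => ∫ x, p t x * ⟪μ x t, f x t⟫) (Set.Icc (0:ℝ) 1) ∧
      IntegrableOn (fun t => ∫ x, p t x * divg (fun y => f y t) x) (Set.Icc (0:ℝ) 1))
    -- the divergence identity, for a.e. `t ∈ [0,1]`, for both `φ` and `φ*`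
    (hdiv : ∀ f ∈ ({φ, φs} :
        Set (EuclideanSpace ℝ (Fin D) → ℝ → EuclideanSpace ℝ (Fin D))),
      ∀ᵐ t ∂(volume.restrict (Set.Icc (0:ℝ) 1)),
        ∫ x, (p t x * divg (fun y => f y t) x + ⟪f x t, gradient (p t) x⟫) = 0)
    -- equality of the two values of the cost functional
    (hL : ∫ t in Set.Icc (0:ℝ) 1, ∫ x,
        p t x * (‖φ x t‖ ^ 2 + 2 * ⟪μ x t, φ x t⟫
          + 2 * σ ^ 2 * divg (fun y => φ y t) x)
      = ∫ t in Set.Icc (0:ℝ) 1, ∫ x,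
        p t x * (‖φs x t‖ ^ 2 + 2 * ⟪μ x t, φs x t⟫
          + 2 * σ ^ 2 * divg (fun y => φs y t) x)) :
    ∀ᵐ q ∂((volume : Measure (EuclideanSpace ℝ (Fin D))).prod
        (volume.restrict (Set.Icc (0:ℝ) 1))),
      φ q.1 q.2 = φs q.1 q.2 :=
  costFunctional_eq_implies_ae_eq_general D σ p hp_diff hp_pos μ hμ_cont φ φs hφs hφ_diff hInt hIntT
    hdiv hL
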